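/- For all n ≥ 1, the number of permutations of length n avoiding both 132 and 321 with exactly k peaks equals n if k = 0, equals C(n−1, 2) if k = 1, and equals 0 for all k ≥ 2. -/

import Mathlib

open scoped Classical

/-- The word `π₁π₂⋯π_n` of a permutation of `{1,…,n}`, with values in `{1,…,n}`. -/
def permWord {n : ℕ} (π : Equiv.Perm (Fin n)) : List ℕ :=
  List.ofFn fun i => (π i : ℕ) + 1

/-- The word `l` contains the word `ρ` as a (classical) pattern. -/
def ContainsPat (l ρ : List ℕ) : Prop :=
  ∃ f : Fin ρ.length → Fin l.length, StrictMono f ∧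
    ∀ a b : Fin ρ.length, ρ.get a < ρ.get b ↔ l.get (f a) < l.get (f b)

/-- `l` avoids every pattern in the list `B`. -/
def AvoidsAll (l : List ℕ) (B : List (List ℕ)) : Prop :=
  ∀ ρ ∈ B, ¬ ContainsPat l ρ

/-- Number of ascents of the word `l`. -/
def ascents (l : List ℕ) : ℕ :=
  ((Finset.range (l.length - 1)).filter fun i => l.getD i 0 < l.getD (i + 1) 0).card

/-- Number of descents of the word `l`. -/
def descents (l : List ℕ) : ℕ :=
  ((Finset.range (l.length - 1)).filter fun i => l.getD (i + 1) 0 < l.getD i 0).card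

/-- Number of double ascents of the word `l`. -/
def dascents (l : List ℕ) : ℕ :=
  ((Finset.range (l.length - 2)).filter fun i =>
    l.getD i 0 < l.getD (i + 1) 0 ∧ l.getD (i + 1) 0 < l.getD (i + 2) 0).card

/-- Number of double descents of the word `l`. -/
def ddescents (l : List ℕ) : ℕ :=
  ((Finset.range (l.length - 2)).filter fun i =>
    l.getD (i + 1) 0 < l.getD i 0 ∧ l.getD (i + 2) 0 < l.getD (i + 1) 0).card

/-- Number of peaks of the word `l`. -/
def peaks (l : List ℕ) : ℕ :=
  ((Finset.range (l.length - 2)).filter fun i =>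
    l.getD i 0 < l.getD (i + 1) 0 ∧ l.getD (i + 2) 0 < l.getD (i + 1) 0).card

/-- Number of valleys of the word `l`. -/
def valleys (l : List ℕ) : ℕ :=
  ((Finset.range (l.length - 2)).filter fun i =>
    l.getD (i + 1) 0 < l.getD i 0 ∧ l.getD (i + 1) 0 < l.getD (i + 2) 0).card

/-- `acount n k stat B` is the number of permutations of `{1,…,n}` avoiding all
patterns in `B` whose statistic `stat` equals `k`. -/
noncomputable def acount (n k : ℕ) (stat : List ℕ → ℕ) (B : List (List ℕ)) : ℕ :=
  (Finset.univ.filter fun π : Equiv.Perm (Fin n) =>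
    AvoidsAll (permWord π) B ∧ stat (permWord π) = k).card

/-!
A permutation avoiding 321 increases before the position `p` of its least value, and one
avoiding 132 increases from `p` on; avoiding 132 also forces every entry after `p` to lie below
`π 0` or above `π (p - 1)`. These facts bound `π` from below, pointwise, by the rotation
`s, s+1, …, t-1, 0, 1, …, s-1, t, …, n-1` of a prefix of the identity word (0-based values,
`s = π 0`, `t = s + p`); as both are permutations, with the same sum of values, they are equal.
Conversely every such rotation avoids both patterns. A rotation has a single peak (at the letter `t - 1`) when
`1 ≤ s ≤ t - 2` and none otherwise, so counting the pairs `(s, t)` gives `n` permutations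
without peaks and `C(n - 1, 2)` with one.
-/

open Finset

/-- The 0-based word `s, s+1, …, t-1, 0, 1, …, s-1, t, t+1, …`: the first `t` letters of the
identity rotated left by `s` (meaningful for `s ≤ t`). -/
def prefixRotationFun (s t i : ℕ) : ℕ :=
  if i + s < t then i + s else if i < t then i + s - t else i

lemma prefixRotationFun_lt {n s t i : ℕ} (hst : s ≤ t) (htn : t ≤ n) (hi : i < n) :
    prefixRotationFun s t i < n := by
  unfold prefixRotationFun
  split_ifs <;> omega

lemma prefixRotationFun_sub_prefixRotationFun {s t : ℕ} (hst : s ≤ t) (i : ℕ) :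
    prefixRotationFun (t - s) t (prefixRotationFun s t i) = i := by
  unfold prefixRotationFun
  split_ifs <;> omega

lemma prefixRotationFun_prefixRotationFun_sub {s t : ℕ} (hst : s ≤ t) (i : ℕ) :
    prefixRotationFun s t (prefixRotationFun (t - s) t i) = i := by
  unfold prefixRotationFun
  split_ifs <;> omega

def prefixRotation (n s t : ℕ) : Equiv.Perm (Fin n) :=
  if h : s ≤ t ∧ t ≤ n then
    { toFun i := ⟨prefixRotationFun s t i, prefixRotationFun_lt h.1 h.2 i.2⟩
      invFun i := ⟨prefixRotationFun (t - s) t i, prefixRotationFun_lt (Nat.sub_le t s) h.2 i.2⟩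
      left_inv i := Fin.ext (prefixRotationFun_sub_prefixRotationFun h.1 i)
      right_inv i := Fin.ext (prefixRotationFun_prefixRotationFun_sub h.1 i) }
  else 1

lemma prefixRotation_val {n s t : ℕ} (hst : s ≤ t) (htn : t ≤ n) (i : Fin n) :
    (prefixRotation n s t i : ℕ) = prefixRotationFun s t i := by
  simp [prefixRotation, hst, htn]

lemma prefixRotation_zero_left (n t : ℕ) : prefixRotation n 0 t = 1 := by
  by_cases htn : t ≤ n
  · ext i
    rw [prefixRotation_val (Nat.zero_le t) htn, prefixRotationFun]
    split_ifs <;> simp only [Equiv.Perm.coe_one, id_eq] <;> omega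
  · simp [prefixRotation, htn]

lemma prefixRotation_self (n s : ℕ) : prefixRotation n s s = 1 := by
  by_cases hsn : s ≤ n
  · ext i
    rw [prefixRotation_val le_rfl hsn, prefixRotationFun]
    split_ifs <;> simp only [Equiv.Perm.coe_one, id_eq] <;> omega
  · simp [prefixRotation, hsn]

lemma Equiv.Perm.eq_of_forall_le {n : ℕ} {σ τ : Equiv.Perm (Fin n)} (h : ∀ i, σ i ≤ τ i) :
    σ = τ := by
  have hsum : ∑ i, (σ i : ℕ) = ∑ i, (τ i : ℕ) := by
    rw [Equiv.sum_comp σ (fun i => (i : ℕ)), Equiv.sum_comp τ (fun i => (i : ℕ))]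
  have heq := (sum_eq_sum_iff_of_le fun i _ => Fin.le_iff_val_le_val.1 (h i)).1 hsum
  ext i
  exact heq i (mem_univ i)

lemma StrictMonoOn.val_add_sub_le {n m : ℕ} {f : Fin n → Fin m} {a b : Fin n}
    (hf : StrictMonoOn f (Set.Icc a b)) (hab : a ≤ b) : (f a : ℕ) + (b - a) ≤ f b := by
  have hfab := hf.monotoneOn ⟨le_rfl, hab⟩ ⟨hab, le_rfl⟩ hab
  have := card_le_card_of_injOn f (s := Icc a b) (t := Icc (f a) (f b))
    (fun i hi => by
      rw [coe_Icc] at hi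
      exact mem_Icc.2 ⟨hf.monotoneOn ⟨le_rfl, hab⟩ hi hi.1, hf.monotoneOn hi ⟨hab, le_rfl⟩ hi.2⟩)
    (by rw [coe_Icc]; exact hf.injOn)
  simp only [Fin.card_Icc] at this
  rw [Fin.le_def] at hfab
  omega

def HasPattern132 {n : ℕ} (π : Equiv.Perm (Fin n)) : Prop :=
  ∃ i j k, i < j ∧ j < k ∧ π i < π k ∧ π k < π j

def HasPattern321 {n : ℕ} (π : Equiv.Perm (Fin n)) : Prop :=
  ∃ i j k, i < j ∧ j < k ∧ π k < π j ∧ π j < π i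

lemma permWord_length {n : ℕ} (π : Equiv.Perm (Fin n)) : (permWord π).length = n := by
  simp [permWord]

lemma permWord_get {n : ℕ} (π : Equiv.Perm (Fin n)) (i : Fin (permWord π).length) :
    (permWord π).get i = π (i.cast (permWord_length π)) + 1 := by
  rw [List.get_eq_getElem]
  simp [permWord, Fin.cast]

lemma permWord_getD {n : ℕ} (π : Equiv.Perm (Fin n)) {i : ℕ} (hi : i < n) :
    (permWord π).getD i 0 = π ⟨i, hi⟩ + 1 := by
  simp [permWord, hi]

lemma containsPat_permWord_iff {n : ℕ} (π : Equiv.Perm (Fin n)) (ρ : List ℕ) :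
    ContainsPat (permWord π) ρ ↔ ∃ f : Fin ρ.length → Fin n, StrictMono f ∧
      ∀ a b, ρ.get a < ρ.get b ↔ π (f a) < π (f b) := by
  have hlen := permWord_length π
  constructor
  · rintro ⟨f, hf, hρ⟩
    refine ⟨fun a => (f a).cast hlen, fun a b hab => hf hab, fun a b => ?_⟩
    rw [hρ, permWord_get, permWord_get, add_lt_add_iff_right]
    rfl
  · rintro ⟨f, hf, hρ⟩
    refine ⟨fun a => (f a).cast hlen.symm, fun a b hab => hf hab, fun a b => ?_⟩
    rw [hρ, permWord_get, permWord_get, add_lt_add_iff_right]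
    rfl

lemma containsPat_132_iff {n : ℕ} (π : Equiv.Perm (Fin n)) :
    ContainsPat (permWord π) [1, 3, 2] ↔ HasPattern132 π := by
  rw [containsPat_permWord_iff]
  constructor
  · rintro ⟨f, hf, hρ⟩
    exact ⟨f 0, f 1, f 2, hf (by decide), hf (by decide), (hρ 0 2).1 (by decide),
      (hρ 2 1).1 (by decide)⟩
  · rintro ⟨i, j, k, hij, hjk, hik, hkj⟩
    refine ⟨![i, j, k], Fin.strictMono_iff_lt_succ.2 ?_, ?_⟩
    · simp [Fin.forall_fin_two, hij, hjk]
    · simp [Fin.forall_fin_succ]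
      omega

lemma containsPat_321_iff {n : ℕ} (π : Equiv.Perm (Fin n)) :
    ContainsPat (permWord π) [3, 2, 1] ↔ HasPattern321 π := by
  rw [containsPat_permWord_iff]
  constructor
  · rintro ⟨f, hf, hρ⟩
    exact ⟨f 0, f 1, f 2, hf (by decide), hf (by decide), (hρ 2 1).1 (by decide),
      (hρ 1 0).1 (by decide)⟩
  · rintro ⟨i, j, k, hij, hjk, hkj, hji⟩
    refine ⟨![i, j, k], Fin.strictMono_iff_lt_succ.2 ?_, ?_⟩
    · simp [Fin.forall_fin_two, hij, hjk]
    · simp [Fin.forall_fin_succ]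
      omega

lemma avoidsAll_132_321_iff {n : ℕ} (π : Equiv.Perm (Fin n)) :
    AvoidsAll (permWord π) [[1, 3, 2], [3, 2, 1]] ↔ ¬HasPattern132 π ∧ ¬HasPattern321 π := by
  simp only [AvoidsAll, List.mem_cons, List.not_mem_nil, or_false, forall_eq_or_imp,
    forall_eq, containsPat_132_iff, containsPat_321_iff]

lemma not_hasPattern132_prefixRotation {n s t : ℕ} (hst : s ≤ t) (htn : t ≤ n) :
    ¬HasPattern132 (prefixRotation n s t) := by
  rintro ⟨i, j, k, hij, hjk, hik, hkj⟩
  simp only [Fin.lt_def, prefixRotation_val hst htn, prefixRotationFun] at *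
  split_ifs at * <;> omega

lemma not_hasPattern321_prefixRotation {n s t : ℕ} (hst : s ≤ t) (htn : t ≤ n) :
    ¬HasPattern321 (prefixRotation n s t) := by
  rintro ⟨i, j, k, hij, hjk, hkj, hji⟩
  simp only [Fin.lt_def, prefixRotation_val hst htn, prefixRotationFun] at *
  split_ifs at * <;> omega

section Structure

variable {n : ℕ} {π : Equiv.Perm (Fin n)} {p : Fin n}

lemma Equiv.Perm.val_ne_zero_of_ne (hp : (π p : ℕ) = 0) {i : Fin n} (hi : i ≠ p) :
    (π i : ℕ) ≠ 0 := fun h =>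
  hi (π.injective (Fin.ext (h.trans hp.symm)))

lemma strictMonoOn_Iio_of_not_hasPattern321 (h321 : ¬HasPattern321 π) (hp : (π p : ℕ) = 0) :
    StrictMonoOn π (Set.Iio p) := fun i _ j hj hij => by
  have hj0 := Equiv.Perm.val_ne_zero_of_ne hp (ne_of_lt hj)
  by_contra hji
  exact h321 ⟨i, j, p, hij, hj, by rw [Fin.lt_def]; omega,
    lt_of_le_of_ne (not_lt.1 hji) (π.injective.ne (ne_of_gt hij))⟩

lemma strictMonoOn_Ici_of_not_hasPattern132 (h132 : ¬HasPattern132 π) (hp : (π p : ℕ) = 0) :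
    StrictMonoOn π (Set.Ici p) := fun j hj k _ hjk => by
  have hk0 := Equiv.Perm.val_ne_zero_of_ne hp (ne_of_gt (lt_of_le_of_lt hj hjk))
  rcases eq_or_lt_of_le (show p ≤ j from hj) with rfl | hpj
  · rw [Fin.lt_def]; omega
  by_contra hkj
  exact h132 ⟨p, j, k, hpj, hjk, by rw [Fin.lt_def]; omega,
    lt_of_le_of_ne (not_lt.1 hkj) (π.injective.ne (ne_of_gt hjk))⟩

lemma val_add_le_of_not_hasPattern321 (h321 : ¬HasPattern321 π) (hp : (π p : ℕ) = 0)
    {z i : Fin n} (hz : (z : ℕ) = 0) (hi : i < p) : (π z : ℕ) + i ≤ π i := by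
  have := ((strictMonoOn_Iio_of_not_hasPattern321 h321 hp).mono
    fun x (hx : x ∈ Set.Icc z i) => lt_of_le_of_lt hx.2 hi).val_add_sub_le
    (show z ≤ i by rw [Fin.le_def]; omega)
  omega

lemma sub_le_val_of_not_hasPattern132 (h132 : ¬HasPattern132 π) (hp : (π p : ℕ) = 0)
    {i : Fin n} (hi : p ≤ i) : (i : ℕ) - p ≤ π i := by
  have := ((strictMonoOn_Ici_of_not_hasPattern132 h132 hp).mono
    fun x (hx : x ∈ Set.Icc p i) => hx.1).val_add_sub_le hi
  omega

/-- Avoiding 132 puts the entry at `q = π 0 + p` below `π 0` or above `π (p - 1) ≥ q - 1`; the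
first is impossible because `π` increases from its zero at `p`. From `q` on `π` still increases. -/
lemma le_val_of_not_hasPattern132_321 (h132 : ¬HasPattern132 π) (h321 : ¬HasPattern321 π)
    (hp : (π p : ℕ) = 0) (hp0 : 0 < (p : ℕ)) {z i : Fin n} (hz : (z : ℕ) = 0)
    (hi : (π z : ℕ) + p ≤ i) : (i : ℕ) ≤ π i := by
  obtain ⟨l, hl⟩ : ∃ l : Fin n, (l : ℕ) = p - 1 := ⟨⟨p - 1, by omega⟩, rfl⟩
  obtain ⟨q, hq⟩ : ∃ q : Fin n, (q : ℕ) = π z + p := ⟨⟨π z + p, by omega⟩, rfl⟩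
  have hlow := val_add_le_of_not_hasPattern321 h321 hp hz (show l < p by rw [Fin.lt_def]; omega)
  have hqlow := sub_le_val_of_not_hasPattern132 h132 hp (show p ≤ q by rw [Fin.le_def]; omega)
  have hgap : π q < π z ∨ π l < π q := by
    by_contra! h
    have hqz : π q ≠ π z := π.injective.ne (Fin.ne_of_val_ne (by omega))
    have hql : π q ≠ π l := π.injective.ne (Fin.ne_of_val_ne (by omega))
    rcases Nat.eq_zero_or_pos (l : ℕ) with hl0 | hl0
    · obtain rfl : l = z := Fin.ext (by omega)
      exact hqz (le_antisymm h.2 h.1)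
    exact h132 ⟨z, l, q, by rw [Fin.lt_def]; omega, by rw [Fin.lt_def]; omega,
      lt_of_le_of_ne h.1 hqz.symm, lt_of_le_of_ne h.2 hql⟩
  have hqi := ((strictMonoOn_Ici_of_not_hasPattern132 h132 hp).mono
    fun x (hx : x ∈ Set.Icc q i) => le_trans (show p ≤ q by rw [Fin.le_def]; omega) hx.1
    ).val_add_sub_le (show q ≤ i by rw [Fin.le_def]; omega)
  rw [Fin.lt_def, Fin.lt_def] at hgap
  omega

theorem exists_eq_prefixRotation (h132 : ¬HasPattern132 π) (h321 : ¬HasPattern321 π) :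
    ∃ s t, s ≤ t ∧ t ≤ n ∧ π = prefixRotation n s t := by
  rcases Nat.eq_zero_or_pos n with rfl | hn
  · exact ⟨0, 0, le_rfl, le_rfl, Subsingleton.elim _ _⟩
  obtain ⟨z, hz⟩ : ∃ z : Fin n, (z : ℕ) = 0 := ⟨⟨0, hn⟩, rfl⟩
  obtain ⟨p, hp⟩ : ∃ p, (π p : ℕ) = 0 := ⟨π.symm z, by simp [hz]⟩
  have lowB := fun i => sub_le_val_of_not_hasPattern132 h132 hp (i := i)
  rcases Nat.eq_zero_or_pos (p : ℕ) with hp0 | hp0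
  · refine ⟨0, 0, le_rfl, Nat.zero_le n, ?_⟩
    rw [prefixRotation_self]
    refine (Equiv.Perm.eq_of_forall_le fun i => ?_).symm
    have := lowB i (by rw [Fin.le_def]; omega)
    rw [Fin.le_def, Equiv.Perm.coe_one, id_eq]
    omega
  have lowA := fun i => val_add_le_of_not_hasPattern321 h321 hp hz (i := i)
  have ht : (π z : ℕ) + p ≤ n := by
    obtain ⟨l, hl⟩ : ∃ l : Fin n, (l : ℕ) = p - 1 := ⟨⟨p - 1, by omega⟩, rfl⟩
    have := lowA l (by rw [Fin.lt_def]; omega)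
    have := (π l).isLt
    omega
  refine ⟨π z, π z + p, Nat.le_add_right _ _, ht, (Equiv.Perm.eq_of_forall_le fun i => ?_).symm⟩
  rw [Fin.le_def, prefixRotation_val (Nat.le_add_right _ _) ht, prefixRotationFun]
  split_ifs with h1 h2
  · have := lowA i (by rw [Fin.lt_def]; omega)
    omega
  · have := lowB i (by rw [Fin.le_def]; omega)
    omega
  · exact le_val_of_not_hasPattern132_321 h132 h321 hp hp0 hz (by omega)

end Structure

theorem avoidsAll_132_321_iff_exists_prefixRotation {n : ℕ} (π : Equiv.Perm (Fin n)) :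
    AvoidsAll (permWord π) [[1, 3, 2], [3, 2, 1]] ↔
      ∃ s t, s ≤ t ∧ t ≤ n ∧ π = prefixRotation n s t := by
  rw [avoidsAll_132_321_iff]
  constructor
  · rintro ⟨h132, h321⟩
    exact exists_eq_prefixRotation h132 h321
  · rintro ⟨s, t, hst, htn, rfl⟩
    exact ⟨not_hasPattern132_prefixRotation hst htn, not_hasPattern321_prefixRotation hst htn⟩

lemma peaks_permWord_prefixRotation {n s t : ℕ} (hst : s ≤ t) (htn : t ≤ n) :
    peaks (permWord (prefixRotation n s t)) = if 1 ≤ s ∧ s + 2 ≤ t then 1 else 0 := by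
  unfold peaks
  rw [permWord_length, filter_congr (q := fun i => prefixRotationFun s t i <
      prefixRotationFun s t (i + 1) ∧ prefixRotationFun s t (i + 2) < prefixRotationFun s t (i + 1))
    fun i hi => by
      rw [mem_range] at hi
      simp only [permWord_getD _ (show i < n by omega), permWord_getD _ (show i + 1 < n by omega),
        permWord_getD _ (show i + 2 < n by omega), prefixRotation_val hst htn, add_lt_add_iff_right]]
  split_ifs with h
  · rw [card_eq_one]
    refine ⟨t - s - 2, ext fun i => ?_⟩
    rw [mem_filter, mem_range, mem_singleton]
    unfold prefixRotationFun
    split_ifs <;> omega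
  · rw [card_eq_zero, filter_eq_empty_iff]
    intro i hi
    rw [mem_range] at hi
    unfold prefixRotationFun
    split_ifs <;> omega

lemma avoidsAll_132_321_and_peaks_eq_iff {n k : ℕ} (π : Equiv.Perm (Fin n)) :
    AvoidsAll (permWord π) [[1, 3, 2], [3, 2, 1]] ∧ peaks (permWord π) = k ↔
      ∃ s t, s ≤ t ∧ t ≤ n ∧ (if 1 ≤ s ∧ s + 2 ≤ t then 1 else 0) = k ∧
        π = prefixRotation n s t := by
  rw [avoidsAll_132_321_iff_exists_prefixRotation]
  constructor
  · rintro ⟨⟨s, t, hst, htn, rfl⟩, hk⟩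
    exact ⟨s, t, hst, htn, peaks_permWord_prefixRotation hst htn ▸ hk, rfl⟩
  · rintro ⟨s, t, hst, htn, hk, rfl⟩
    exact ⟨⟨s, t, hst, htn, rfl⟩, (peaks_permWord_prefixRotation hst htn).trans hk⟩

lemma prefixRotationFun_eq_of_prefixRotation_eq {n s t s' t' : ℕ} (hst : s ≤ t) (htn : t ≤ n)
    (hst' : s' ≤ t') (htn' : t' ≤ n) (h : prefixRotation n s t = prefixRotation n s' t')
    {i : ℕ} (hi : i < n) : prefixRotationFun s t i = prefixRotationFun s' t' i := by
  rw [← prefixRotation_val hst htn ⟨i, hi⟩, ← prefixRotation_val hst' htn' ⟨i, hi⟩, h]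

lemma acount_132_321_peaks_eq_zero_of_two_le {n k : ℕ} (hk : 2 ≤ k) :
    acount n k peaks [[1, 3, 2], [3, 2, 1]] = 0 := by
  rw [acount, card_eq_zero, filter_eq_empty_iff]
  rintro π - hπ
  obtain ⟨s, t, -, -, hpk, -⟩ := (avoidsAll_132_321_and_peaks_eq_iff π).1 hπ
  split_ifs at hpk <;> omega

lemma acount_132_321_zero_peaks {n : ℕ} (hn : 1 ≤ n) :
    acount n 0 peaks [[1, 3, 2], [3, 2, 1]] = n := by
  conv_rhs => rw [← card_range n]
  refine (card_bij (fun s _ => prefixRotation n s (s + 1)) (fun s hs => ?_)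
    (fun s hs s' hs' h => ?_) fun π hπ => ?_).symm
  · rw [mem_range] at hs
    exact mem_filter.2 ⟨mem_univ _, (avoidsAll_132_321_and_peaks_eq_iff _).2
      ⟨s, s + 1, by omega, hs, if_neg (by omega), rfl⟩⟩
  · rw [mem_range] at hs hs'
    have := prefixRotationFun_eq_of_prefixRotation_eq (by omega) hs (by omega) hs' h hn
    simpa [prefixRotationFun] using this
  · obtain ⟨s, t, hst, htn, hpk, rfl⟩ :=
      (avoidsAll_132_321_and_peaks_eq_iff π).1 (mem_filter.1 hπ).2
    rw [ite_eq_right_iff] at hpk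
    obtain rfl | rfl | rfl : s = 0 ∨ t = s ∨ t = s + 1 := by omega
    · exact ⟨0, mem_range.2 hn, by rw [prefixRotation_zero_left, prefixRotation_zero_left]⟩
    · exact ⟨0, mem_range.2 hn, by rw [prefixRotation_zero_left, prefixRotation_self]⟩
    · exact ⟨s, mem_range.2 (by omega), rfl⟩

lemma acount_132_321_one_peak (n : ℕ) :
    acount n 1 peaks [[1, 3, 2], [3, 2, 1]] = (n - 1).choose 2 := by
  have hcard : #((range (n - 1)).sigma range) = (n - 1).choose 2 := by
    rw [card_sigma]
    simp only [card_range, sum_range_id, Nat.choose_two_right]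
  rw [← hcard]
  -- `a < b < n - 1` encodes `1 ≤ s ≤ t - 2 ≤ n - 2` through `s = a + 1`, `t = b + 2`
  refine (card_bij (fun x _ => prefixRotation n (x.2 + 1) (x.1 + 2)) (fun x hx => ?_)
    (fun x hx x' hx' h => ?_) fun π hπ => ?_).symm
  · simp only [mem_sigma, mem_range] at hx
    exact mem_filter.2 ⟨mem_univ _, (avoidsAll_132_321_and_peaks_eq_iff _).2
      ⟨_, _, by omega, by omega, if_pos (by omega), rfl⟩⟩
  · -- `s` is the first letter and `t - s` the position of the letter `0`
    obtain ⟨b, a⟩ := x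
    obtain ⟨b', a'⟩ := x'
    simp only [mem_sigma, mem_range] at hx hx'
    dsimp only at h
    have key := fun i (hi : i < n) => prefixRotationFun_eq_of_prefixRotation_eq
      (by omega) (by omega) (by omega) (by omega) h hi
    have h0 := key 0 (by omega)
    have h1 := key (b + 1 - a) (by omega)
    have h2 := key (b' + 1 - a') (by omega)
    unfold prefixRotationFun at h0 h1 h2
    simp only [Sigma.mk.injEq, heq_eq_eq]
    split_ifs at h0 h1 h2 <;> omega
  · obtain ⟨s, t, hst, htn, hpk, rfl⟩ :=
      (avoidsAll_132_321_and_peaks_eq_iff π).1 (mem_filter.1 hπ).2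
    rw [ite_eq_left_iff] at hpk
    exact ⟨⟨t - 2, s - 1⟩, by simp only [mem_sigma, mem_range]; omega, by
      dsimp only
      congr 1 <;> omega⟩

theorem stmt19 (n : ℕ) (hn : 1 ≤ n) :
    acount n 0 peaks [[1,3,2],[3,2,1]] = n ∧
    acount n 1 peaks [[1,3,2],[3,2,1]] = Nat.choose (n - 1) 2 ∧
    ∀ k, 2 ≤ k → acount n k peaks [[1,3,2],[3,2,1]] = 0 :=
  ⟨acount_132_321_zero_peaks hn, acount_132_321_one_peak n,
    fun _ hk => acount_132_321_peaks_eq_zero_of_two_le hk⟩
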